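/- Fix eps ∈ (0,1/50]. There exists a universal constant C̄ > 0 such that for all C_- ≥ C̄ and all A > 0 there exists S0 > 0 (depending on A, C_-, eps) with the following property. Let s1 > s0 ≥ S0 and let b, b̃ : [s0,s1] → (0,∞) with b̃ differentiable, b̃' = -b·b̃, (1-eps)/s ≤ b(s) ≤ (1+eps)/s and (1-2·eps)/s ≤ b̃(s) ≤ (1+2·eps)/s for all s ∈ [s0,s1]. Then the function W_+(s,ψ) := (6ψ)^{4/3}/4 + A·ψ^{10/3}·b̃(s)² satisfies ∂_sW_+ - 2b·W_+ + (3b/2)·ψ·∂_ψW_+ - √(W_+)·∂_ψ²W_+ + 2 ≥ 0 at every point (s,ψ) with s ∈ [s0,s1] and ψ ≥ C_-·b̃(s)^{-3/4}. -/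

import Mathlib

/-!
The profile `W₀ = (6ψ)^{4/3}/4` solves the equation exactly: being homogeneous of degree `4/3`,
it makes the transport terms `-2bW₀ + (3b/2)ψ∂_ψW₀` cancel, and `√W₀ · ∂_ψ²W₀ = 2`. On the
correction `V = Aψ^{10/3}b̃²` the transport terms together with `∂_sV = -2bV` leave `+bV`, while
`√(W₀ + V) ≤ √W₀ + V/(2√W₀)` and `√(W₀ + V) ≤ √W₀ + √V` show that the diffusion term exceeds `2`
by at most `V·(36/W₀ + (70/9)√V/ψ²)`. In the region `ψ ≥ C_-·b̃^{-3/4}`, with `C_- ≥ 144` and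
`s` large in terms of `A`, each of the two rates is at most `b̃/4`, and `b̃ ≤ 2b`.
-/

open Set MeasureTheory Filter
open scoped Topology

/-- The supersolution `W_+(s,ψ) = (6ψ)^{4/3}/4 + A·ψ^{10/3}·b̃(s)²`. -/
noncomputable def Wplus (A : ℝ) (btil : ℝ → ℝ) (s psi : ℝ) : ℝ :=
  (6 * psi) ^ ((4:ℝ)/3) / 4 + A * psi ^ ((10:ℝ)/3) * btil s ^ 2

noncomputable def vonMises (b : ℝ → ℝ) (W : ℝ → ℝ → ℝ) (s ψ : ℝ) : ℝ :=
  deriv (fun σ => W σ ψ) s - 2 * b s * W s ψ + 3 * b s / 2 * ψ * deriv (W s) ψ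
    - √(W s ψ) * iteratedDeriv 2 (W s) ψ + 2

theorem iteratedDeriv_const_mul_rpow (c p : ℝ) (n : ℕ) {x : ℝ} (hx : 0 < x) :
    iteratedDeriv n (fun y => c * y ^ p) x = (descPochhammer ℝ n).eval p * (c * x ^ p) / x ^ n := by
  rw [iteratedDeriv_const_mul_field, iteratedDeriv_eq_iterate, Real.iter_deriv_rpow_const,
    Real.rpow_sub_natCast hx.ne']
  ring

theorem Wplus_eventuallyEq (A : ℝ) (btil : ℝ → ℝ) (s : ℝ) {ψ : ℝ} (hψ : 0 < ψ) :
    Wplus A btil s =ᶠ[𝓝 ψ]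
      fun y => 6 ^ ((4:ℝ)/3) / 4 * y ^ ((4:ℝ)/3) + A * btil s ^ 2 * y ^ ((10:ℝ)/3) := by
  filter_upwards [Ioi_mem_nhds hψ] with y hy
  rw [Wplus, Real.mul_rpow (by norm_num) hy.le]
  ring

theorem iteratedDeriv_Wplus (A : ℝ) (btil : ℝ → ℝ) (s : ℝ) (n : ℕ) {ψ : ℝ} (hψ : 0 < ψ) :
    iteratedDeriv n (Wplus A btil s) ψ =
      (descPochhammer ℝ n).eval (4/3) * ((6 * ψ) ^ ((4:ℝ)/3) / 4) / ψ ^ n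
        + (descPochhammer ℝ n).eval (10/3) * (A * ψ ^ ((10:ℝ)/3) * btil s ^ 2) / ψ ^ n := by
  have hsmooth (c p : ℝ) : ContDiffAt ℝ n (fun y => c * y ^ p) ψ :=
    contDiffAt_const.mul (Real.contDiffAt_rpow_const_of_ne hψ.ne')
  rw [(Wplus_eventuallyEq A btil s hψ).iteratedDeriv_eq,
    iteratedDeriv_fun_add (hsmooth _ _) (hsmooth _ _), iteratedDeriv_const_mul_rpow _ _ _ hψ,
    iteratedDeriv_const_mul_rpow _ _ _ hψ, Real.mul_rpow (by norm_num) hψ.le]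
  ring

theorem hasDerivAt_Wplus_time (A : ℝ) {btil : ℝ → ℝ} {s d : ℝ} (ψ : ℝ)
    (h : HasDerivAt btil d s) :
    HasDerivAt (fun σ => Wplus A btil σ ψ) (2 * A * ψ ^ ((10:ℝ)/3) * btil s * d) s := by
  have := ((h.fun_pow 2).const_mul (A * ψ ^ ((10:ℝ)/3))).const_add ((6 * ψ) ^ ((4:ℝ)/3) / 4)
  exact this.congr_deriv (by push_cast; ring)

theorem vonMises_Wplus (A : ℝ) {b btil : ℝ → ℝ} {s ψ : ℝ} (hψ : 0 < ψ)
    (hbtil : HasDerivAt btil (-(b s * btil s)) s) :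
    vonMises b (Wplus A btil) s ψ =
      b s * (A * ψ ^ ((10:ℝ)/3) * btil s ^ 2) + 2
        - √((6 * ψ) ^ ((4:ℝ)/3) / 4 + A * ψ ^ ((10:ℝ)/3) * btil s ^ 2)
          * (4 / 9 * ((6 * ψ) ^ ((4:ℝ)/3) / 4) / ψ ^ 2
            + 70 / 9 * (A * ψ ^ ((10:ℝ)/3) * btil s ^ 2) / ψ ^ 2) := by
  rw [vonMises, (hasDerivAt_Wplus_time A ψ hbtil).deriv, ← iteratedDeriv_one,
    iteratedDeriv_Wplus _ _ _ 1 hψ, iteratedDeriv_Wplus _ _ _ 2 hψ, Wplus]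
  norm_num [descPochhammer_succ_right]
  field_simp
  ring

theorem profile_cube {ψ : ℝ} (hψ : 0 ≤ ψ) :
    ((6 * ψ) ^ ((4:ℝ)/3) / 4) ^ 3 = 81 / 4 * ψ ^ 4 := by
  rw [div_pow, ← Real.rpow_natCast, ← Real.rpow_mul (by positivity)]
  norm_num
  ring

theorem rpow_four_thirds_le_profile {ψ : ℝ} (hψ : 0 ≤ ψ) :
    ψ ^ ((4:ℝ)/3) ≤ (6 * ψ) ^ ((4:ℝ)/3) / 4 := by
  have h6 : (6:ℝ) ≤ 6 ^ ((4:ℝ)/3) := by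
    simpa using Real.rpow_le_rpow_of_exponent_le (by norm_num : (1:ℝ) ≤ 6)
      (by norm_num : (1:ℝ) ≤ 4/3)
  rw [Real.mul_rpow (by norm_num) hψ]
  nlinarith [Real.rpow_nonneg hψ ((4:ℝ)/3)]

theorem sqrt_add_le_add_div {X V : ℝ} (hX : 0 < X) (hV : 0 ≤ V) :
    √(X ^ 2 + V) ≤ X + V / (2 * X) := by
  rw [Real.sqrt_le_left (by positivity)]
  have : (X + V / (2 * X)) ^ 2 = X ^ 2 + V + (V / (2 * X)) ^ 2 := by field_simp; ring
  nlinarith [sq_nonneg (V / (2 * X))]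

theorem sqrt_add_le_add_sqrt {X V : ℝ} (hX : 0 ≤ X) (hV : 0 ≤ V) :
    √(X ^ 2 + V) ≤ X + √V := by
  rw [Real.sqrt_le_left (by positivity), add_sq, Real.sq_sqrt hV]
  nlinarith [Real.sqrt_nonneg V]

/- `hprofile` is the identity `√W₀ · (4/9)W₀/ψ² = 2` with the root cleared. -/
theorem sqrt_mul_le_of_profile {W₀ V ψ : ℝ} (hW₀ : 0 < W₀) (hV : 0 ≤ V)
    (hprofile : W₀ ^ 3 = 81 / 4 * ψ ^ 4) :
    √(W₀ + V) * (4 / 9 * W₀ / ψ ^ 2 + 70 / 9 * V / ψ ^ 2)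
      ≤ 2 + V * (36 / W₀ + 70 / 9 * √V / ψ ^ 2) := by
  set X := √W₀
  have hX : 0 < X := Real.sqrt_pos.mpr hW₀
  have hXsq : X ^ 2 = W₀ := Real.sq_sqrt hW₀.le
  have hXψ : X ^ 3 = 9 / 2 * ψ ^ 2 := by
    refine (pow_left_inj₀ (by positivity) ?_ two_ne_zero).mp ?_
    · nlinarith [pow_pos hW₀ 3, sq_nonneg ψ]
    · linear_combination (by rw [← hXsq]; ring : (X ^ 3) ^ 2 = W₀ ^ 3) + hprofile
  rw [show ψ ^ 2 = 2 / 9 * X ^ 3 by linear_combination -(2 / 9) * hXψ, ← hXsq]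
  calc √(X ^ 2 + V) * (4 / 9 * X ^ 2 / (2 / 9 * X ^ 3) + 70 / 9 * V / (2 / 9 * X ^ 3))
      = √(X ^ 2 + V) * (2 / X) + √(X ^ 2 + V) * (70 / 9 * V / (2 / 9 * X ^ 3)) := by
        field_simp; ring
    _ ≤ (X + V / (2 * X)) * (2 / X) + (X + √V) * (70 / 9 * V / (2 / 9 * X ^ 3)) := by
        gcongr
        · exact sqrt_add_le_add_div hX hV
        · exact sqrt_add_le_add_sqrt hX.le hV
    _ = 2 + V * (36 / X ^ 2 + 70 / 9 * √V / (2 / 9 * X ^ 3)) := by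
        field_simp; ring

theorem rpow_four_thirds_le_of_le {C β ψ : ℝ} (hC : 0 ≤ C) (hβ : 0 < β)
    (h : C * β ^ (-(3:ℝ)/4) ≤ ψ) : C ^ ((4:ℝ)/3) ≤ β * ψ ^ ((4:ℝ)/3) := by
  have h' := Real.rpow_le_rpow (by positivity) h (by norm_num : (0:ℝ) ≤ 4/3)
  rw [Real.mul_rpow hC (by positivity), ← Real.rpow_mul hβ.le] at h'
  norm_num at h'
  rw [Real.rpow_neg_one] at h'
  calc C ^ ((4:ℝ)/3) = β * (C ^ ((4:ℝ)/3) * β⁻¹) := by field_simp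
    _ ≤ β * ψ ^ ((4:ℝ)/3) := by gcongr

theorem mul_sqrt_le_sq_of_rpow {A K ψ : ℝ} (hK : 0 ≤ K) (hψ : 0 < ψ)
    (h : K ^ 4 * A ^ 2 ≤ ψ ^ ((4:ℝ)/3)) : K * √(A * ψ ^ ((10:ℝ)/3)) ≤ ψ ^ 2 := by
  have hsq : (ψ ^ ((2:ℝ)/3)) ^ 2 = ψ ^ ((4:ℝ)/3) := by
    rw [← Real.rpow_natCast, ← Real.rpow_mul hψ.le]; norm_num
  have hsplit : ψ ^ 4 = ψ ^ ((2:ℝ)/3) * ψ ^ ((10:ℝ)/3) := by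
    rw [← Real.rpow_add hψ, ← Real.rpow_natCast]; norm_num
  have hA : K ^ 2 * A ≤ ψ ^ ((2:ℝ)/3) :=
    (abs_le_of_sq_le_sq' (by nlinarith) (by positivity)).2
  rw [← Real.sqrt_sq hK, ← Real.sqrt_mul (sq_nonneg K), Real.sqrt_le_left (by positivity),
    ← pow_mul, hsplit, ← mul_assoc]
  gcongr

theorem vonMises_Wplus_nonneg {A : ℝ} {b btil : ℝ → ℝ} {s ψ : ℝ} (hA : 0 ≤ A) (hψ : 0 < ψ)
    (hβ : 0 < btil s) (hbtil : HasDerivAt btil (-(b s * btil s)) s) (hβb : btil s ≤ 2 * b s)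
    (hfar : 144 ≤ btil s * ψ ^ ((4:ℝ)/3)) (hlarge : (280 / 9) ^ 4 * A ^ 2 ≤ ψ ^ ((4:ℝ)/3)) :
    0 ≤ vonMises b (Wplus A btil) s ψ := by
  have hV : 0 ≤ A * ψ ^ ((10:ℝ)/3) * btil s ^ 2 := by positivity
  have hprofile_err : 36 / ((6 * ψ) ^ ((4:ℝ)/3) / 4) ≤ btil s / 4 := by
    rw [div_le_iff₀ (by positivity)]
    nlinarith [rpow_four_thirds_le_profile hψ.le]
  have hcorrection_err : 70 / 9 * √(A * ψ ^ ((10:ℝ)/3) * btil s ^ 2) / ψ ^ 2 ≤ btil s / 4 := by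
    have := mul_sqrt_le_sq_of_rpow (by norm_num : (0:ℝ) ≤ 280 / 9) hψ hlarge
    rw [Real.sqrt_mul (by positivity), Real.sqrt_sq hβ.le, div_le_iff₀ (by positivity)]
    nlinarith
  have hcore := sqrt_mul_le_of_profile (by positivity) hV (profile_cube hψ.le)
  rw [vonMises_Wplus A hψ hbtil]
  nlinarith [mul_le_mul_of_nonneg_left (add_le_add hprofile_err hcorrection_err) hV,
    mul_le_mul_of_nonneg_left hβb hV]

/-- `W_+` is a supersolution of the von Mises form of the rescaled Prandtl equation
on the region `ψ ≥ C_-·b̃^{-3/4}`. -/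
theorem Wplus_supersolution :
    ∀ eps : ℝ, eps ∈ Ioc (0:ℝ) (1/50) →
      ∃ Cbar : ℝ, 0 < Cbar ∧
        ∀ Cm : ℝ, Cbar ≤ Cm → ∀ A : ℝ, 0 < A →
          ∃ S0 : ℝ, 0 < S0 ∧
            ∀ s0 s1 : ℝ, S0 ≤ s0 → s0 < s1 →
              ∀ b btil : ℝ → ℝ,
                (∀ s ∈ Icc s0 s1, 0 < b s ∧ 0 < btil s) →
                (∀ s ∈ Icc s0 s1, HasDerivAt btil (-(b s * btil s)) s) →
                (∀ s ∈ Icc s0 s1, (1 - eps) / s ≤ b s ∧ b s ≤ (1 + eps) / s) →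
                (∀ s ∈ Icc s0 s1, (1 - 2 * eps) / s ≤ btil s ∧ btil s ≤ (1 + 2 * eps) / s) →
                ∀ s ∈ Icc s0 s1, ∀ psi : ℝ,
                  Cm * btil s ^ (-(3:ℝ)/4) ≤ psi →
                  deriv (fun σ => Wplus A btil σ psi) s
                    - 2 * b s * Wplus A btil s psi
                    + 3 * b s / 2 * psi * deriv (Wplus A btil s) psi
                    - Real.sqrt (Wplus A btil s psi)
                      * iteratedDeriv 2 (Wplus A btil s) psi
                    + 2 ≥ 0 := by
  intro eps heps
  refine ⟨144, by norm_num, fun Cm hCm A hA => ⟨2 * (280 / 9) ^ 4 * A ^ 2, by positivity, ?_⟩⟩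
  intro s0 s1 hS0 _ b btil hpos hderiv hb hbtil s hs ψ hψ
  have hβ : 0 < btil s := (hpos s hs).2
  have hs₀ : 0 < s := by linarith [hs.1, show 0 < 2 * (280 / 9) ^ 4 * A ^ 2 by positivity]
  have hψ₀ : 0 < ψ := lt_of_lt_of_le (by positivity) hψ
  have hβs : btil s * s ≤ 2 := by
    linarith [(le_div_iff₀ hs₀).mp (hbtil s hs).2, heps.2]
  have hβb : btil s ≤ 2 * b s := by
    nlinarith [(div_le_iff₀ hs₀).mp (hb s hs).1, (le_div_iff₀ hs₀).mp (hbtil s hs).2, heps.2]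
  have hfar : 144 ≤ btil s * ψ ^ ((4:ℝ)/3) := by
    have := Real.self_le_rpow_of_one_le (by linarith : (1:ℝ) ≤ Cm) (by norm_num : (1:ℝ) ≤ 4/3)
    linarith [rpow_four_thirds_le_of_le (by linarith) hβ hψ]
  have hlarge : (280 / 9) ^ 4 * A ^ 2 ≤ ψ ^ ((4:ℝ)/3) := by
    nlinarith [hs.1, Real.rpow_nonneg hψ₀.le ((4:ℝ)/3)]
  exact vonMises_Wplus_nonneg hA.le hψ₀ hβ (hderiv s hs) hβb hfar hlarge
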